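/- Let n ≥ 1, 1 ≤ m ≤ n, and m < s ≤ 2n, and let μ_{2n,m} be the unique U(n)-invariant Borel probability measure on G_h(2n,m). There exists a constant C = C(n,m,s) > 0 such that for every Borel set A ⊆ ℝ^{2n}, every x ∈ ℝ^{2n}, and every r > 0, the upper integral satisfies ∫* H^{s−m}[ (A \ B(x,r)) ∩ (V^⊥ + x) ] dμ_{2n,m}(V) ≤ C r^{−m} H^s(A \ B(x,r)). -/

import Mathlib

open MeasureTheory Module Metric Set
open scoped ENNReal NNReal Real

noncomputable section

/-- Euclidean space `ℝ^{2n}`. -/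
abbrev E (n : ℕ) : Type := EuclideanSpace ℝ (Fin (2 * n))

/-- The standard symplectic form `ω((x,y),(u,v)) = x·v − y·u` on `ℝ^{2n}`. -/
def symp (n : ℕ) (x y : E n) : ℝ :=
  ∑ i : Fin n, (x ⟨i.1, by have := i.2; omega⟩ * y ⟨i.1 + n, by have := i.2; omega⟩ -
    x ⟨i.1 + n, by have := i.2; omega⟩ * y ⟨i.1, by have := i.2; omega⟩)

/-- A linear subspace of `ℝ^{2n}` is isotropic if the symplectic form vanishes on it. -/
def IsIsotropic (n : ℕ) (V : Submodule ℝ (E n)) : Prop :=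
  ∀ v ∈ V, ∀ w ∈ V, symp n v w = 0

/-- The orthogonal projection onto a subspace, as a continuous linear endomorphism. -/
def projCLM (n : ℕ) (V : Submodule ℝ (E n)) : E n →L[ℝ] E n :=
  V.subtypeL.comp (V.orthogonalProjectionOnto)

/-- The isotropic Grassmannian `G_h(2n,m)`, realized as the set of orthogonal projection
operators onto `m`-dimensional isotropic subspaces, inside the continuous linear
endomorphisms of `ℝ^{2n}`.  For `P` in this set, the corresponding plane `V` is
`LinearMap.range P` and the orthogonal projection `P_V` is `P` itself. -/
def grass (n m : ℕ) : Set (E n →L[ℝ] E n) :=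
  {P | ∃ V : Submodule ℝ (E n), IsIsotropic n V ∧ finrank ℝ V = m ∧ P = projCLM n V}

/-- Membership in `U(n)`: a linear isometry of `ℝ^{2n}` preserving the symplectic form. -/
def IsUnitary (n : ℕ) (g : E n ≃ₗᵢ[ℝ] E n) : Prop :=
  ∀ x y, symp n (g x) (g y) = symp n x y

/-- The action of an isometry on projection operators: `P ↦ g ∘ P ∘ g⁻¹`. -/
def conjAct (n : ℕ) (g : E n ≃ₗᵢ[ℝ] E n) (P : E n →L[ℝ] E n) : E n →L[ℝ] E n :=
  (g.toLinearIsometry.toContinuousLinearMap.comp P).comp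
    g.symm.toLinearIsometry.toContinuousLinearMap

/-- `ν` is a `U(n)`-invariant Borel probability measure `μ_{2n,m}` on `G_h(2n,m)`:
a Borel measure on the space of operators giving full mass to the isotropic
Grassmannian and invariant under the conjugation action of the unitary group.
(Probability is imposed via an `IsProbabilityMeasure` instance.) -/
def IsGrassMeasure (n m : ℕ) (ν : Measure (E n →L[ℝ] E n)) : Prop :=
  ν (grass n m) = 1 ∧
    ∀ g : E n ≃ₗᵢ[ℝ] E n, IsUnitary n g → Measure.map (conjAct n g) ν = ν

/-!
Cover `A \ B(x, r)` by sets `u` of small diameter with `∑ diam(u)^s` close to `H^s(A \ B(x, r))`.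
A piece `u` can meet the plane `V^⊥ + x` only if `|P_V (p - x)| ≤ diam u` for a point `p ∈ u`, and
`|p - x| > r`; by transversality this happens for a set of `V` of measure `≤ C (diam u / r)^m`.
Integrating over `V` the `(s - m)`-dimensional covering sums of the slices therefore gives at most
`C r^{-m} ∑ diam(u)^s`, and Fatou's lemma passes to `H^{s-m}` as the diameters tend to `0`.

Transversality holds with `C = 2^{2n}`. As `U(n)` is transitive on spheres, invariance makes the
measure of `{V : |P_V z| ≤ t |z|}` independent of `z ≠ 0`, so it equals its average over `z` in the
unit ball; for a fixed `V`, these `z` lie in the image of the ball of radius `2` under the linear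
map `t P_V + (1 - P_V)`, of determinant `t^m`.
-/

open Filter
open scoped Topology RealInnerProductSpace

theorem LinearMap.IsProj.det_smul_add_one_sub {𝕜 M : Type*} [Field 𝕜] [AddCommGroup M]
    [Module 𝕜 M] [FiniteDimensional 𝕜 M] {p : Submodule 𝕜 M} {f : M →ₗ[𝕜] M}
    (h : IsProj p f) (t : 𝕜) : LinearMap.det (t • f + (1 - f)) = t ^ finrank 𝕜 p := by
  set e := p.prodEquivOfIsCompl (ker f) h.isCompl
  have hconj : t • f + (1 - f) = e.conj (prodMap (t • id) id) := by
    refine (congrArg (fun g => t • g + (1 - g)) h.eq_conj_prodMap).trans ?_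
    rw [Module.End.one_eq_id, ← LinearEquiv.conj_id e, ← map_smul, ← map_sub, ← map_add]
    congr 1
    ext <;> simp
  rw [hconj, LinearEquiv.conj_apply, comp_assoc, det_conj, det_prodMap, det_smul, det_id, det_id,
    mul_one, mul_one]

theorem exists_linearIsometryEquiv_apply_eq {𝕜 G : Type*} [RCLike 𝕜] [NormedAddCommGroup G]
    [InnerProductSpace 𝕜 G] [FiniteDimensional 𝕜 G] {u u' : G} (h : ‖u‖ = ‖u'‖) :
    ∃ U : G ≃ₗᵢ[𝕜] G, U u = u' := by
  rcases eq_or_ne u 0 with rfl | hu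
  · exact ⟨LinearIsometryEquiv.refl 𝕜 G, (norm_eq_zero.1 (by rw [← h, norm_zero])).symm⟩
  have hu' : u' ≠ 0 := norm_ne_zero_iff.1 (h ▸ norm_ne_zero_iff.2 hu)
  have hpos : 0 < finrank 𝕜 G := Module.finrank_pos_iff_exists_ne_zero.2 ⟨u, hu⟩
  set i₀ : Fin (finrank 𝕜 G) := ⟨0, hpos⟩
  have hbasis : ∀ v : G, v ≠ 0 →
      ∃ b : OrthonormalBasis (Fin (finrank 𝕜 G)) 𝕜 G, b i₀ = ((‖v‖ : 𝕜)⁻¹ • v) := by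
    intro v hv
    obtain ⟨b, hb⟩ := Orthonormal.exists_orthonormalBasis_extension_of_card_eq
      (𝕜 := 𝕜) (v := fun _ => ((‖v‖ : 𝕜)⁻¹ • v)) (s := {i₀}) (by simp)
      (orthonormal_subsingleton_iff.2 fun _ => norm_smul_inv_norm hv)
    exact ⟨b, hb i₀ rfl⟩
  obtain ⟨b, hb⟩ := hbasis u hu
  obtain ⟨b', hb'⟩ := hbasis u' hu'
  refine ⟨b.repr.trans b'.repr.symm, ?_⟩
  have hu_eq : u = (‖u‖ : 𝕜) • b i₀ := by
    rw [hb, smul_inv_smul₀ (by exact_mod_cast norm_ne_zero_iff.2 hu)]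
  have hu'_eq : u' = (‖u'‖ : 𝕜) • b' i₀ := by
    rw [hb', smul_inv_smul₀ (by exact_mod_cast norm_ne_zero_iff.2 hu')]
  rw [hu_eq, hu'_eq, map_smul, h]
  simp

theorem exists_cover_tsum_ediam_rpow_lt {X : Type*} [EMetricSpace X] [MeasurableSpace X]
    [BorelSpace X] {s : ℝ} (hs : 0 < s) {A : Set X} {c : ℝ≥0∞} (hc : μH[s] A < c)
    {δ : ℝ≥0∞} (hδ : 0 < δ) :
    ∃ u : ℕ → Set X, (∀ i, u i ⊆ A) ∧ A ⊆ ⋃ i, u i ∧ (∀ i, ediam (u i) ≤ δ) ∧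
      ∑' i, ediam (u i) ^ s < c := by
  rw [Measure.hausdorffMeasure_apply] at hc
  obtain ⟨t, htA, htδ, htc⟩ : ∃ t : ℕ → Set X, A ⊆ ⋃ i, t i ∧ (∀ i, ediam (t i) ≤ δ) ∧
      ∑' i, ⨆ _ : (t i).Nonempty, ediam (t i) ^ s < c := by
    simpa only [iInf_lt_iff, exists_prop] using (le_iSup₂_of_le δ hδ le_rfl).trans_lt hc
  refine ⟨fun i => t i ∩ A, fun i => inter_subset_right, fun y hy => ?_,
    fun i => (ediam_mono inter_subset_left).trans (htδ i), lt_of_le_of_lt ?_ htc⟩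
  · obtain ⟨i, hi⟩ := mem_iUnion.1 (htA hy)
    exact mem_iUnion.2 ⟨i, hi, hy⟩
  refine ENNReal.tsum_le_tsum fun i => ?_
  rcases (t i).eq_empty_or_nonempty with hti | hti
  · simp [hti, ENNReal.zero_rpow_of_pos hs]
  · rw [iSup_pos hti]
    exact ENNReal.rpow_le_rpow (ediam_mono inter_subset_left) hs.le

section Operators

variable {F : Type*} [NormedAddCommGroup F] [NormedSpace ℝ F]

theorem setOf_norm_apply_smul_le {c : ℝ} (hc : c ≠ 0) (w : F) (t : ℝ) :
    {P : F →L[ℝ] F | ‖P (c • w)‖ ≤ t * ‖c • w‖} = {P | ‖P w‖ ≤ t * ‖w‖} := by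
  ext P
  simp only [mem_ofPred_eq, map_smul, norm_smul, mul_left_comm t]
  exact mul_le_mul_iff_right₀ (norm_pos_iff.2 hc)

theorem measurableSet_setOf_norm_apply_le (z : F) (c : ℝ) :
    MeasurableSet {P : F →L[ℝ] F | ‖P z‖ ≤ c} :=
  measurableSet_le (by fun_prop : Continuous fun P : F →L[ℝ] F => ‖P z‖).measurable
    measurable_const

/-- The transversality estimate of projection theorems: when `ν` lives on the projections onto
`m`-planes `V`, a nonzero vector is rarely almost orthogonal to `V`. -/
def Transversality (ν : Measure (F →L[ℝ] F)) (m : ℕ) (C : ℝ) : Prop :=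
  ∀ z : F, z ≠ 0 → ∀ t : ℝ, 0 ≤ t → ν {P | ‖P z‖ ≤ t * ‖z‖} ≤ ENNReal.ofReal (C * t ^ m)

theorem Transversality.mono {ν ν' : Measure (F →L[ℝ] F)} {m : ℕ} {C : ℝ}
    (h : Transversality ν m C) (hle : ν' ≤ ν) : Transversality ν' m C :=
  fun z hz t ht => (hle _).trans (h z hz t ht)

theorem Transversality.measure_setOf_norm_apply_le_toReal_mul_rpow_le
    {ν : Measure (F →L[ℝ] F)} {m : ℕ} {C : ℝ} (hν : Transversality ν m C) (hC : 0 ≤ C)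
    {s : ℝ} (hs : m < s) {r : ℝ} (hr : 0 < r) {z : F} (hz : r < ‖z‖) {d : ℝ≥0∞} (hd : d ≠ ⊤) :
    ν {P | ‖P z‖ ≤ d.toReal} * d ^ (s - m) ≤ ENNReal.ofReal (C / r ^ m) * d ^ s := by
  have hz0 : 0 < ‖z‖ := hr.trans hz
  have hset : {P : F →L[ℝ] F | ‖P z‖ ≤ d.toReal} = {P | ‖P z‖ ≤ d.toReal / ‖z‖ * ‖z‖} := by
    rw [div_mul_cancel₀ _ hz0.ne']
  have hpow : C * (d.toReal / ‖z‖) ^ m ≤ C / r ^ m * d.toReal ^ m := by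
    rw [div_pow, mul_div_assoc', div_mul_eq_mul_div]
    gcongr
  calc ν {P | ‖P z‖ ≤ d.toReal} * d ^ (s - m)
      ≤ ENNReal.ofReal (C / r ^ m * d.toReal ^ m) * d ^ (s - m) := by
        rw [hset]
        gcongr
        exact (hν z (norm_pos_iff.1 hz0) _ (by positivity)).trans (ENNReal.ofReal_le_ofReal hpow)
    _ = ENNReal.ofReal (C / r ^ m) * d ^ s := by
        rw [ENNReal.ofReal_mul (by positivity), ENNReal.ofReal_pow ENNReal.toReal_nonneg,
          ENNReal.ofReal_toReal hd, mul_assoc, ← ENNReal.rpow_natCast,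
          ← ENNReal.rpow_add_of_nonneg _ _ (Nat.cast_nonneg m) (by linarith), add_sub_cancel]

def slicingWeight (a : ℝ) (x p : F) (u : Set F) (P : F →L[ℝ] F) : ℝ≥0∞ :=
  {Q : F →L[ℝ] F | ‖Q (p - x)‖ ≤ (ediam u).toReal}.indicator (fun _ => ediam u ^ a) P

theorem measurable_slicingWeight (a : ℝ) (x p : F) (u : Set F) :
    Measurable (slicingWeight a x p u) :=
  measurable_const.indicator (measurableSet_setOf_norm_apply_le _ _)

theorem Transversality.lintegral_slicingWeight_le {ν : Measure (F →L[ℝ] F)} {m : ℕ} {C : ℝ}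
    (hν : Transversality ν m C) (hC : 0 ≤ C) {s : ℝ} (hs : m < s) {r : ℝ} (hr : 0 < r)
    {x p : F} {u : Set F} (hu : ediam u ≠ ⊤) (hp : u.Nonempty → p ∈ u)
    (hux : ∀ y ∈ u, r < ‖y - x‖) :
    ∫⁻ P, slicingWeight (s - m) x p u P ∂ν ≤ ENNReal.ofReal (C / r ^ m) * ediam u ^ s := by
  unfold slicingWeight
  rw [lintegral_indicator_const (measurableSet_setOf_norm_apply_le _ _), mul_comm]
  rcases u.eq_empty_or_nonempty with rfl | hne
  · simp [ENNReal.zero_rpow_of_pos (sub_pos.2 hs)]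
  exact hν.measure_setOf_norm_apply_le_toReal_mul_rpow_le hC hs hr (hux p (hp hne)) hu

end Operators

section StarProjection

variable {F : Type*} [NormedAddCommGroup F] [InnerProductSpace ℝ F] [FiniteDimensional ℝ F]

/-- The plane `V^⊥ + x`, for `V` the range of `P`. -/
def orthogonalFiber (P : F →L[ℝ] F) (x : F) : Set F :=
  {y | y - x ∈ (LinearMap.range (P : F →ₗ[ℝ] F))ᗮ}

theorem IsStarProjection.norm_apply_sub_le_ediam {P : F →L[ℝ] F} (hP : IsStarProjection P)
    {u : Set F} (hu : ediam u ≠ ⊤) {p x y : F} (hp : p ∈ u) (hy : y ∈ u ∩ orthogonalFiber P x) :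
    ‖P (p - x)‖ ≤ (ediam u).toReal := by
  obtain ⟨_, hPK⟩ := isStarProjection_iff_eq_starProjection_range.1 hP
  have hPy : P (y - x) = 0 := by
    rw [hPK]
    exact (Submodule.starProjection_apply_eq_zero_iff _).2 hy.2
  calc ‖P (p - x)‖ = ‖P (p - y)‖ := by
        rw [← sub_add_sub_cancel p y x, map_add, hPy, add_zero]
    _ ≤ ‖p - y‖ := by
        rw [hPK]
        exact Submodule.norm_starProjection_apply_le _ _
    _ ≤ (ediam u).toReal := by
        rw [← dist_eq_norm, dist_edist]
        exact ENNReal.toReal_mono hu (edist_le_ediam_of_mem hp hy.1)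

theorem ediam_inter_orthogonalFiber_rpow_le_slicingWeight {P : F →L[ℝ] F}
    (hP : IsStarProjection P) {a : ℝ} (ha : 0 < a) {u : Set F} (hu : ediam u ≠ ⊤) {p : F}
    (hp : u.Nonempty → p ∈ u) (x : F) :
    ediam (u ∩ orthogonalFiber P x) ^ a ≤ slicingWeight a x p u P := by
  rcases eq_empty_or_nonempty (u ∩ orthogonalFiber P x) with hempty | ⟨y, hy⟩
  · simp [hempty, ENNReal.zero_rpow_of_pos ha]
  have hPmem : P ∈ {Q : F →L[ℝ] F | ‖Q (p - x)‖ ≤ (ediam u).toReal} :=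
    hP.norm_apply_sub_le_ediam hu (hp ⟨y, hy.1⟩) hy
  rw [slicingWeight, indicator_of_mem hPmem]
  exact ENNReal.rpow_le_rpow (ediam_mono inter_subset_left) ha.le

variable [MeasurableSpace F] [BorelSpace F]

theorem IsStarProjection.hausdorffMeasure_inter_orthogonalFiber_le_liminf {P : F →L[ℝ] F}
    (hP : IsStarProjection P) {a : ℝ} (ha : 0 < a) {A : Set F} {u : ℕ → ℕ → Set F}
    {δ : ℕ → ℝ≥0∞} (hδ : Tendsto δ atTop (𝓝 0))
    (hcover : ∀ k, A ⊆ ⋃ i, u k i) (hdiam : ∀ k i, ediam (u k i) ≤ δ k)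
    (hfin : ∀ k i, ediam (u k i) ≠ ⊤) {p : ℕ → ℕ → F} (hp : ∀ k i, (u k i).Nonempty → p k i ∈ u k i)
    (x : F) :
    μH[a] (A ∩ orthogonalFiber P x) ≤
      liminf (fun k => ∑' i, slicingWeight a x (p k i) (u k i) P) atTop := by
  refine (Measure.hausdorffMeasure_le_liminf_tsum _ _ δ hδ
    (fun k i => u k i ∩ orthogonalFiber P x)
    (.of_forall fun k i => (ediam_mono inter_subset_left).trans (hdiam k i))
    (.of_forall fun k y hy => ?_)).trans
    (liminf_le_liminf (.of_forall fun k => ENNReal.tsum_le_tsum fun i =>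
      ediam_inter_orthogonalFiber_rpow_le_slicingWeight hP ha (hfin k i) (hp k i) x))
  obtain ⟨i, hi⟩ := mem_iUnion.1 (hcover k hy.1)
  exact mem_iUnion.2 ⟨i, hi, hy.2⟩

theorem Submodule.addHaar_norm_starProjection_le_inter_ball_le (μ : Measure F)
    [μ.IsAddHaarMeasure] (K : Submodule ℝ F) {t : ℝ} (ht : 0 ≤ t) :
    μ ({z | ‖K.starProjection z‖ ≤ t} ∩ ball 0 1) ≤
      ENNReal.ofReal (t ^ finrank ℝ K) * μ (ball 0 2) := by
  set P := K.starProjection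
  set T : F →ₗ[ℝ] F := t • P.toLinearMap + (1 - P.toLinearMap)
  have hP : LinearMap.IsProj K P.toLinearMap := by
    simpa [P] using LinearMap.IsIdempotentElem.isProj_range _
      (ContinuousLinearMap.IsIdempotentElem.toLinearMap K.isIdempotentElem_starProjection)
  have hsub : {z | ‖P z‖ ≤ t} ∩ ball 0 1 ⊆ T '' ball 0 2 := by
    rintro z ⟨hzt, hz1⟩
    refine ⟨t⁻¹ • P z + (z - P z), ?_, ?_⟩
    · have h1 : ‖t⁻¹ • P z‖ ≤ 1 := by
        rw [norm_smul, norm_inv, Real.norm_of_nonneg ht]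
        exact inv_mul_le_one_of_le₀ hzt ht
      have h2 : ‖z - P z‖ < 1 := by
        rw [← K.starProjection_orthogonal_val]
        exact (Kᗮ.norm_starProjection_apply_le z).trans_lt (mem_ball_zero_iff.1 hz1)
      rw [mem_ball_zero_iff]
      linarith [norm_add_le (t⁻¹ • P z) (z - P z)]
    · have htP : t⁻¹ • t • P z = P z := by
        rcases ht.eq_or_lt with rfl | ht0
        · simpa using (norm_le_zero_iff.1 hzt).symm
        · exact inv_smul_smul₀ ht0.ne' _
      have hPP : P (P z) = P z := K.starProjection_eq_self_iff.2 (K.starProjection_apply_mem z)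
      simp only [T, LinearMap.add_apply, LinearMap.smul_apply, LinearMap.sub_apply,
        Module.End.one_apply, ContinuousLinearMap.coe_coe, map_add, map_smul, map_sub, hPP,
        sub_self, add_zero]
      rw [htP]
      abel
  calc μ ({z | ‖P z‖ ≤ t} ∩ ball 0 1) ≤ μ (T '' ball 0 2) := measure_mono hsub
    _ = ENNReal.ofReal |LinearMap.det T| * μ (ball 0 2) := μ.addHaar_image_linearMap T _
    _ = ENNReal.ofReal (t ^ finrank ℝ K) * μ (ball 0 2) := by
        rw [hP.det_smul_add_one_sub, abs_of_nonneg (pow_nonneg ht _)]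

theorem transversality_of_measure_eq {ν : Measure (F →L[ℝ] F)} [IsProbabilityMeasure ν] {m : ℕ}
    (hproj : ∀ᵐ P ∂ν, ∃ K : Submodule ℝ F, finrank ℝ K = m ∧ P = K.starProjection)
    (hinv : ∀ (t : ℝ) (w z : F), w ≠ 0 → z ≠ 0 →
      ν {P | ‖P w‖ ≤ t * ‖w‖} = ν {P | ‖P z‖ ≤ t * ‖z‖}) :
    Transversality ν m (2 ^ finrank ℝ F) := by
  intro z hz t ht
  have : Nontrivial F := ⟨⟨z, 0, hz⟩⟩
  set μ : Measure F := Measure.addHaar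
  set S : Set ((F →L[ℝ] F) × F) := {p | ‖p.1 p.2‖ ≤ t * ‖p.2‖}
  have hS : MeasurableSet S := (isClosed_le (continuous_fst.clm_apply continuous_snd).norm
    (continuous_const.mul continuous_snd.norm)).measurableSet
  have hlower : (ν.prod (μ.restrict (ball 0 1))) S = ν {P | ‖P z‖ ≤ t * ‖z‖} * μ (ball 0 1) := by
    have hslice : ∀ᵐ w ∂μ.restrict (ball 0 1),
        ν ((fun P => (P, w)) ⁻¹' S) = ν {P | ‖P z‖ ≤ t * ‖z‖} := by
      filter_upwards [ae_restrict_of_ae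
        (measure_eq_zero_iff_ae_notMem.1 (measure_singleton (μ := μ) 0))] with w hw
      exact hinv t w z hw hz
    rw [Measure.prod_apply_symm hS, lintegral_congr_ae hslice, lintegral_const,
      Measure.restrict_apply_univ]
  have hupper : (ν.prod (μ.restrict (ball 0 1))) S ≤ ENNReal.ofReal (t ^ m) * μ (ball 0 2) := by
    rw [Measure.prod_apply hS]
    refine (lintegral_mono_ae ?_).trans_eq (by rw [lintegral_const, measure_univ, mul_one])
    filter_upwards [hproj] with P ⟨K, hK, hPK⟩
    rw [Measure.restrict_apply (hS.preimage measurable_prodMk_left), ← hK]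
    refine (measure_mono ?_).trans (K.addHaar_norm_starProjection_le_inter_ball_le μ ht)
    rintro w ⟨hw, hw1⟩
    refine ⟨?_, hw1⟩
    calc ‖K.starProjection w‖ = ‖P w‖ := by rw [hPK]
      _ ≤ t * ‖w‖ := hw
      _ ≤ t := mul_le_of_le_one_right ht (mem_ball_zero_iff.1 hw1).le
  have hball2 : μ (ball 0 2) = ENNReal.ofReal (2 ^ finrank ℝ F) * μ (ball 0 1) := by
    rw [μ.addHaar_ball 0 zero_le_two]
  rw [ENNReal.ofReal_mul (by positivity), mul_comm (ENNReal.ofReal _),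
    ← ENNReal.mul_le_mul_iff_left (measure_ball_pos μ 0 one_pos).ne' measure_ball_lt_top.ne,
    ← hlower, mul_assoc, ← hball2]
  exact hupper

theorem Transversality.lintegral_hausdorffMeasure_inter_orthogonalFiber_le
    {ν : Measure (F →L[ℝ] F)} {m : ℕ} {C : ℝ} (hν : Transversality ν m C) (hC : 0 < C)
    (hproj : ∀ᵐ P ∂ν, IsStarProjection P) {s : ℝ} (hs : m < s) {A : Set F} {x : F} {r : ℝ}
    (hr : 0 < r) (hA : ∀ y ∈ A, r < ‖y - x‖) :
    ∫⁻ P, μH[s - m] (A ∩ orthogonalFiber P x) ∂ν ≤ ENNReal.ofReal (C / r ^ m) * μH[s] A := by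
  set K := ENNReal.ofReal (C / r ^ m)
  have hK0 : K ≠ 0 := (ENNReal.ofReal_pos.2 (by positivity)).ne'
  have hsm : 0 < s - m := sub_pos.2 hs
  suffices key : ∀ c, μH[s] A < c → ∫⁻ P, μH[s - m] (A ∩ orthogonalFiber P x) ∂ν ≤ K * c by
    rw [mul_comm, ← ENNReal.div_le_iff hK0 ENNReal.ofReal_ne_top]
    exact le_of_forall_gt_imp_ge_of_dense fun c hc =>
      (ENNReal.div_le_iff hK0 ENNReal.ofReal_ne_top).2 ((key c hc).trans_eq (mul_comm _ _))
  intro c hc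
  set δ : ℕ → ℝ≥0∞ := fun k => ((k : ℝ≥0∞) + 1)⁻¹
  have hδ : Tendsto δ atTop (𝓝 0) :=
    ENNReal.tendsto_inv_nat_nhds_zero.comp (tendsto_add_atTop_nat 1) |>.congr fun k => by simp [δ]
  choose u huA hcover hdiam hsum using fun k =>
    exists_cover_tsum_ediam_rpow_lt (hsm.trans_le (by simp)) hc (δ := δ k) (by simp [δ])
  have hfin : ∀ k i, ediam (u k i) ≠ ⊤ := fun k i => ((hdiam k i).trans_lt (by simp [δ])).ne
  have hpts : ∀ k i, ∃ p, (u k i).Nonempty → p ∈ u k i := fun k i =>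
    (u k i).eq_empty_or_nonempty.elim (fun h => ⟨x, fun h' => (h'.ne_empty h).elim⟩)
      fun ⟨y, hy⟩ => ⟨y, fun _ => hy⟩
  choose p hp using hpts
  set g : ℕ → (F →L[ℝ] F) → ℝ≥0∞ := fun k P => ∑' i, slicingWeight (s - m) x (p k i) (u k i) P
  have hint : ∀ k, ∫⁻ P, g k P ∂ν ≤ K * c := fun k => calc
    ∫⁻ P, g k P ∂ν = ∑' i, ∫⁻ P, slicingWeight (s - m) x (p k i) (u k i) P ∂ν :=
      lintegral_tsum fun i => (measurable_slicingWeight _ _ _ _).aemeasurable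
    _ ≤ ∑' i, K * ediam (u k i) ^ s := ENNReal.tsum_le_tsum fun i =>
      hν.lintegral_slicingWeight_le hC.le hs hr (hfin k i) (hp k i) fun y hy => hA y (huA k i hy)
    _ ≤ K * c := by
      rw [ENNReal.tsum_mul_left]
      exact mul_le_mul_right (hsum k).le K
  calc ∫⁻ P, μH[s - m] (A ∩ orthogonalFiber P x) ∂ν
      ≤ ∫⁻ P, liminf (fun k => g k P) atTop ∂ν := lintegral_mono_ae <| hproj.mono fun P hP =>
        hP.hausdorffMeasure_inter_orthogonalFiber_le_liminf hsm hδ hcover hdiam hfin hp x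
    _ ≤ liminf (fun k => ∫⁻ P, g k P ∂ν) atTop :=
      lintegral_liminf_le fun k => Measurable.tsum fun i => measurable_slicingWeight _ _ _ _
    _ ≤ K * c := liminf_le_of_frequently_le' (.of_forall hint)

end StarProjection

theorem Fin.sum_two_mul {M : Type*} [AddCommMonoid M] (n : ℕ) (f : Fin (2 * n) → M) :
    ∑ i, f i = ∑ j : Fin n, (f ⟨j, by omega⟩ + f ⟨j + n, by omega⟩) := by
  rw [← Fin.sum_congr' f (two_mul n).symm, Fin.sum_univ_add, ← Finset.sum_add_distrib]
  refine Finset.sum_congr rfl fun j _ => ?_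
  congr 2
  ext
  simp [add_comm]

/-- The identification `ℝ^{2n} ≅ ℂ^n`, `(x, y) ↦ x + i y`. -/
def toComplex (n : ℕ) : E n →ₗ[ℝ] EuclideanSpace ℂ (Fin n) where
  toFun x := WithLp.toLp 2 fun j => ⟨x ⟨j, by omega⟩, x ⟨j + n, by omega⟩⟩
  map_add' x y := by ext j; apply Complex.ext <;> simp
  map_smul' c x := by ext j; apply Complex.ext <;> simp

theorem inner_toComplex (n : ℕ) (x y : E n) :
    inner ℂ (toComplex n x) (toComplex n y) = ⟨⟪x, y⟫, symp n x y⟩ := by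
  rw [PiLp.inner_apply, PiLp.inner_apply, Fin.sum_two_mul]
  apply Complex.ext
  · simp [toComplex, Complex.re_sum, Finset.sum_add_distrib]
  · rw [Complex.im_sum]
    refine Finset.sum_congr rfl fun j _ => ?_
    simp [toComplex]
    ring

def complexEquiv (n : ℕ) : E n ≃ₗᵢ[ℝ] EuclideanSpace ℂ (Fin n) :=
  ((toComplex n).isometryOfInner fun x y => by
      have := congrArg Complex.re (inner_toComplex n x y)
      rw [PiLp.inner_apply] at this ⊢
      simpa [Complex.re_sum, Complex.inner] using this).toLinearIsometryEquiv <| by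
    rw [← Module.finrank_mul_finrank ℝ ℂ (EuclideanSpace ℂ (Fin n)), Complex.finrank_real_complex,
      finrank_euclideanSpace_fin, finrank_euclideanSpace_fin]

theorem symp_eq_im_inner (n : ℕ) (x y : E n) :
    symp n x y = (inner ℂ (complexEquiv n x) (complexEquiv n y)).im :=
  (congrArg Complex.im (inner_toComplex n x y)).symm

theorem exists_isUnitary_apply_eq {n : ℕ} {z z' : E n} (h : ‖z‖ = ‖z'‖) :
    ∃ g, IsUnitary n g ∧ g z = z' := by
  set ψ := complexEquiv n
  obtain ⟨U, hU⟩ := exists_linearIsometryEquiv_apply_eq (𝕜 := ℂ) (u := ψ z) (u' := ψ z')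
    (by rw [ψ.norm_map, ψ.norm_map, h])
  let Uℝ : EuclideanSpace ℂ (Fin n) ≃ₗᵢ[ℝ] EuclideanSpace ℂ (Fin n) :=
    ⟨U.toLinearEquiv.restrictScalars ℝ, U.norm_map⟩
  have hUℝ : ∀ w, Uℝ w = U w := fun _ => rfl
  refine ⟨(ψ.trans Uℝ).trans ψ.symm, fun x y => ?_, ?_⟩
  · simp [symp_eq_im_inner, hUℝ, ψ]
  · simp [hUℝ, hU]

theorem mem_grass_iff {n m : ℕ} {P : E n →L[ℝ] E n} :
    P ∈ grass n m ↔ IsStarProjection P ∧ LinearMap.trace ℝ (E n) P = m ∧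
      ∀ u v, symp n (P u) (P v) = 0 := by
  have htrace : ∀ {Q : E n →L[ℝ] E n}, IsIdempotentElem Q →
      LinearMap.trace ℝ (E n) Q = finrank ℝ (LinearMap.range (Q : E n →ₗ[ℝ] E n)) := fun hQ =>
    (LinearMap.IsIdempotentElem.isProj_range _
      (ContinuousLinearMap.IsIdempotentElem.toLinearMap hQ)).trace
  constructor
  · rintro ⟨V, hiso, rfl, rfl⟩
    refine ⟨isStarProjection_starProjection, ?_, fun u v => hiso _ (V.starProjection_apply_mem u)
      _ (V.starProjection_apply_mem v)⟩
    change LinearMap.trace ℝ (E n) V.starProjection = _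
    rw [htrace V.isIdempotentElem_starProjection,
      show LinearMap.range (V.starProjection : E n →ₗ[ℝ] E n) = V from V.range_starProjection]
  · rintro ⟨hP, htr, hsymp⟩
    obtain ⟨_, hPV⟩ := isStarProjection_iff_eq_starProjection_range.1 hP
    refine ⟨LinearMap.range (P : E n →ₗ[ℝ] E n), ?_, ?_, hPV⟩
    · rintro _ ⟨u, rfl⟩ _ ⟨v, rfl⟩
      exact hsymp u v
    · exact_mod_cast (htrace hP.isIdempotentElem).symm.trans htr

theorem isClosed_grass (n m : ℕ) : IsClosed (grass n m) := by
  have happ : ∀ x : E n, Continuous fun P : E n →L[ℝ] E n => P x := fun x =>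
    continuous_id.clm_apply continuous_const
  have hsymp : Continuous fun p : E n × E n => symp n p.1 p.2 := by
    unfold symp; fun_prop
  have hgrass : grass n m = {P : E n →L[ℝ] E n | P * P = P} ∩
      {P | ContinuousLinearMap.adjoint P = P} ∩
      {P | LinearMap.trace ℝ (E n) (P : E n →ₗ[ℝ] E n) = m} ∩
      ⋂ u, ⋂ v, {P | symp n (P u) (P v) = 0} := by
    ext P
    simp [mem_grass_iff, isStarProjection_iff, IsIdempotentElem,
      ContinuousLinearMap.isSelfAdjoint_iff', and_assoc]
  rw [hgrass]
  refine ((isClosed_eq (continuous_mul.comp (continuous_id.prodMk continuous_id)) continuous_id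
    |>.inter (isClosed_eq ContinuousLinearMap.adjoint.continuous continuous_id)).inter
    (isClosed_eq ?_ continuous_const)).inter
    (isClosed_iInter fun u => isClosed_iInter fun v =>
      isClosed_eq (hsymp.comp ((happ u).prodMk (happ v))) continuous_const)
  exact LinearMap.continuous_of_finiteDimensional
    ((LinearMap.trace ℝ (E n)).comp (ContinuousLinearMap.coeLM ℝ))

theorem continuous_conjAct (n : ℕ) (g : E n ≃ₗᵢ[ℝ] E n) : Continuous (conjAct n g) := by
  unfold conjAct
  fun_prop

namespace IsGrassMeasure

variable {n m : ℕ} {ν : Measure (E n →L[ℝ] E n)}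

theorem ae_mem_grass [IsProbabilityMeasure ν] (hν : IsGrassMeasure n m ν) :
    ∀ᵐ P ∂ν, P ∈ grass n m :=
  ae_iff.2 ((prob_compl_eq_zero_iff (isClosed_grass n m).measurableSet).2 hν.1)

theorem measure_setOf_norm_apply_le_eq (hν : IsGrassMeasure n m ν) (t : ℝ) {w z : E n}
    (hw : w ≠ 0) (hz : z ≠ 0) :
    ν {P | ‖P w‖ ≤ t * ‖w‖} = ν {P | ‖P z‖ ≤ t * ‖z‖} := by
  have hc : ‖z‖ / ‖w‖ ≠ 0 := div_ne_zero (norm_ne_zero_iff.2 hz) (norm_ne_zero_iff.2 hw)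
  set w' := (‖z‖ / ‖w‖) • w
  have hw' : ‖w'‖ = ‖z‖ := by
    rw [norm_smul, Real.norm_of_nonneg (by positivity), div_mul_cancel₀ _ (norm_ne_zero_iff.2 hw)]
  obtain ⟨g, hg, hgw⟩ := exists_isUnitary_apply_eq hw'
  rw [← hgw]
  have hpre : conjAct n g ⁻¹' {P | ‖P (g w')‖ ≤ t * ‖g w'‖} = {P | ‖P w'‖ ≤ t * ‖w'‖} := by
    ext P
    simp [conjAct]
  rw [← setOf_norm_apply_smul_le hc w t, ← hpre, ← Measure.map_apply
    (continuous_conjAct n g).measurable (measurableSet_setOf_norm_apply_le _ _), hν.2 g hg]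

end IsGrassMeasure

theorem stmt9_general (n m : ℕ) (s : ℝ) (hs1 : (m : ℝ) < s)
    (ν : Measure (E n →L[ℝ] E n)) [IsProbabilityMeasure ν] (hν : IsGrassMeasure n m ν) :
    ∃ C : ℝ, 0 < C ∧ ∀ A : Set (E n), MeasurableSet A → ∀ x : E n, ∀ r : ℝ, 0 < r →
      ∫⁻ P in grass n m,
          μH[s - m] ((A \ closedBall x r) ∩ {y : E n | y - x ∈ (LinearMap.range (P : E n →ₗ[ℝ] E n))ᗮ}) ∂ν
        ≤ ENNReal.ofReal (C / r ^ m) * μH[s] (A \ closedBall x r) := by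
  refine ⟨2 ^ finrank ℝ (E n), by positivity, fun A _ x r hr => ?_⟩
  have htrans : Transversality ν m (2 ^ finrank ℝ (E n)) :=
    transversality_of_measure_eq (hν.ae_mem_grass.mono fun P ⟨V, _, hV, hP⟩ => ⟨V, hV, hP⟩)
      fun t _ _ hw hz => hν.measure_setOf_norm_apply_le_eq t hw hz
  have hproj : ∀ᵐ P ∂ν.restrict (grass n m), IsStarProjection P :=
    ae_restrict_of_forall_mem (isClosed_grass n m).measurableSet fun P hP => (mem_grass_iff.1 hP).1
  exact (htrans.mono Measure.restrict_le_self).lintegral_hausdorffMeasure_inter_orthogonalFiber_le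
    (by positivity) hproj hs1 hr fun y hy => by simpa [dist_eq_norm] using hy.2

/-- There is a constant `C = C(n,m,s) > 0` such that for every Borel set `A ⊆ ℝ^{2n}`,
every `x` and every `r > 0`,
`∫ H^{s−m}[(A \ B(x,r)) ∩ (V^⊥ + x)] dμ_{2n,m}(V) ≤ C r^{−m} H^s(A \ B(x,r))`. -/
theorem stmt9 (n m : ℕ) (hn : 1 ≤ n) (hm : 1 ≤ m) (hmn : m ≤ n)
    (s : ℝ) (hs1 : (m : ℝ) < s) (hs2 : s ≤ 2 * n)
    (ν : Measure (E n →L[ℝ] E n)) [IsProbabilityMeasure ν] (hν : IsGrassMeasure n m ν) :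
    ∃ C : ℝ, 0 < C ∧ ∀ A : Set (E n), MeasurableSet A → ∀ x : E n, ∀ r : ℝ, 0 < r →
      ∫⁻ P in grass n m,
          μH[s - m] ((A \ closedBall x r) ∩ {y : E n | y - x ∈ (LinearMap.range (P : E n →ₗ[ℝ] E n))ᗮ}) ∂ν
        ≤ ENNReal.ofReal (C / r ^ m) * μH[s] (A \ closedBall x r) :=
  stmt9_general n m s hs1 ν hν
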